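/- The graph K_4 minus an edge is not 5-anti-common: there exist 5-edge-colorings of K_n (for n → ∞) with at least n^4/62 + O(n^3) rainbow copies of K_4∖e, and n^4/62 > 6n^4/625 = (C(n,4)·4!·C(5,5)·5!)/(4·5^5) + O(n^3), exceeding the random-coloring count. -/

import Mathlib

/-!
Place vertex `x` of `K_n` in part `x % 5` at position `x / 5`; an edge between parts `u ≠ v` gets
colour `u + v (mod 5)`, and edges inside a part are coloured recursively. Each of the 40 labelled
rainbow copies of `K_4∖e` in the colouring of `K_5` lifts to `(n/5)^4` copies across the parts,
and each part contributes its own copies, so `R(n) ≥ 40 (n/5)^4 + 5 R(n/5)`. This forces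
`R(n) ≥ 2n^4/31 - O(n^3)`, i.e. `n^4/62` unlabelled copies, whereas the random proportion
`5!/5^5` is below `3/62`.
-/
open Filter Topology

/-- A copy of `H` (given by an injection `f`) in `K_n` is rainbow under the
edge-coloring `c` if all edges of the copy receive distinct colors. -/
def IsRainbow {m n r : ℕ} (H : SimpleGraph (Fin m)) (c : Sym2 (Fin n) → Fin r)
    (f : Fin m ↪ Fin n) : Prop :=
  ∀ e₁ ∈ H.edgeSet, ∀ e₂ ∈ H.edgeSet, e₁ ≠ e₂ → c (e₁.map ⇑f) ≠ c (e₂.map ⇑f)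

/-- Number of (labeled) rainbow copies of `H` in `K_n` under the coloring `c`. -/
noncomputable def rainbowCount {m n r : ℕ} (H : SimpleGraph (Fin m))
    (c : Sym2 (Fin n) → Fin r) : ℕ :=
  Nat.card {f : Fin m ↪ Fin n // IsRainbow H c f}

/-- `rbL H n r`: the maximum number of labeled rainbow copies of `H` over all
`r`-edge-colorings of `K_n`.  (The labeled count is `|Aut H|` times the number
of rainbow copies `rb_r(H;n)` of the paper.) -/
noncomputable def rbL {m : ℕ} (H : SimpleGraph (Fin m)) (n r : ℕ) : ℕ :=
  sSup (Set.range fun c : Sym2 (Fin n) → Fin r => rainbowCount H c)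

/-- The number of automorphisms of `H`. -/
noncomputable def autCard {m : ℕ} (H : SimpleGraph (Fin m)) : ℕ :=
  Nat.card (H ≃g H)

/-- `rbC H n r`: the maximum proportion of copies of `H` in `K_n` which are rainbow,
i.e. `rb_r(H;n) / (C(n,m)·m!/|Aut(H)|) = rbL H n r / (C(n,m)·m!)`. -/
noncomputable def rbC {m : ℕ} (H : SimpleGraph (Fin m)) (n r : ℕ) : ℝ :=
  (rbL H n r : ℝ) / ((n.choose m) * (m.factorial))

/-- `K_4` minus an edge, as a graph on `Fin 4`. -/
def K4e : SimpleGraph (Fin 4) := (SimpleGraph.completeGraph (Fin 4)).deleteEdges {s(2, 3)}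

instance {m n r : ℕ} (H : SimpleGraph (Fin m)) [DecidableRel H.Adj] (c : Sym2 (Fin n) → Fin r) :
    DecidablePred (IsRainbow H c) := fun f => by unfold IsRainbow; infer_instance

theorem isRainbow_congr {m n n' r : ℕ} {H : SimpleGraph (Fin m)}
    {c : Sym2 (Fin n) → Fin r} {c' : Sym2 (Fin n') → Fin r} {f : Fin m ↪ Fin n}
    {f' : Fin m ↪ Fin n'} (h : ∀ i j, H.Adj i j → c s(f i, f j) = c' s(f' i, f' j)) :
    IsRainbow H c f ↔ IsRainbow H c' f' := by
  have hedge : ∀ e ∈ H.edgeSet, c (e.map f) = c' (e.map f') := by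
    intro e he
    induction e using Sym2.ind with
    | _ i j => exact h i j he
  unfold IsRainbow
  exact forall₂_congr fun e₁ h₁ => forall₂_congr fun e₂ h₂ => by rw [hedge e₁ h₁, hedge e₂ h₂]

section Placement

variable {b q n m : ℕ}

def blowupVertex (hn : q * b ≤ n) : Fin q × Fin b ↪ Fin n :=
  finProdFinEquiv.toEmbedding.trans (Fin.castLEEmb hn)

@[simp]
theorem blowupVertex_val (hn : q * b ≤ n) (p : Fin q × Fin b) :
    (blowupVertex hn p : ℕ) = p.2 + b * p.1 := rfl

def crossingCopy (g : Fin m ↪ Fin b) (a : Fin m → Fin q) : Fin m ↪ Fin q × Fin b :=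
  ⟨fun i => (a i, g i), fun _ _ h => g.injective (congrArg Prod.snd h)⟩

def innerCopy (u : Fin b) (f : Fin m ↪ Fin q) : Fin m ↪ Fin q × Fin b :=
  f.trans (Function.Embedding.sectL _ u)

theorem crossingCopy_inj {g g' : Fin m ↪ Fin b} {a a' : Fin m → Fin q} :
    crossingCopy g a = crossingCopy g' a' ↔ g = g' ∧ a = a' := by
  constructor
  · intro h
    exact ⟨Function.Embedding.ext fun i => congrArg Prod.snd (DFunLike.congr_fun h i),
      funext fun i => congrArg Prod.fst (DFunLike.congr_fun h i)⟩
  · rintro ⟨rfl, rfl⟩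
    rfl

theorem innerCopy_inj (hm : 0 < m) {u u' : Fin b} {f f' : Fin m ↪ Fin q} :
    innerCopy u f = innerCopy u' f' ↔ u = u' ∧ f = f' := by
  constructor
  · intro h
    exact ⟨congrArg Prod.snd (DFunLike.congr_fun h ⟨0, hm⟩),
      Function.Embedding.ext fun i => congrArg Prod.fst (DFunLike.congr_fun h i)⟩
  · rintro ⟨rfl, rfl⟩
    rfl

theorem crossingCopy_ne_innerCopy (hm : 1 < m) (g : Fin m ↪ Fin b) (a : Fin m → Fin q)
    (u : Fin b) (f : Fin m ↪ Fin q) : crossingCopy g a ≠ innerCopy u f := by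
  intro h
  have h0 := congrArg Prod.snd (DFunLike.congr_fun h ⟨0, by omega⟩)
  have h1 := congrArg Prod.snd (DFunLike.congr_fun h ⟨1, hm⟩)
  exact g.injective.ne (by simp) (h0.trans h1.symm)

end Placement

section Blowup

variable {b r : ℕ} [Fact (1 < b)] (c₀ : Sym2 (Fin b) → Fin r)

/-- Vertex `x` lies in part `x % b` at position `x / b`; the value on the diagonal is junk. -/
def blowupColor (x y : ℕ) : Fin r :=
  if x % b = y % b ∧ x ≠ y then blowupColor (x / b) (y / b)
  else c₀ s(⟨x % b, Nat.mod_lt _ (Nat.zero_lt_of_lt (Fact.out : 1 < b))⟩,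
    ⟨y % b, Nat.mod_lt _ (Nat.zero_lt_of_lt (Fact.out : 1 < b))⟩)
termination_by x + y
decreasing_by
  have : 1 < b := Fact.out
  have := Nat.div_lt_self (n := x + y) (by omega) this
  have : x / b + y / b ≤ (x + y) / b := Nat.div_add_div_le_add_div
  omega

theorem blowupColor_comm (x y : ℕ) : blowupColor c₀ x y = blowupColor c₀ y x := by
  fun_induction blowupColor c₀ x y with
  | case1 x y h ih =>
    rw [ih, blowupColor.eq_1 c₀ y x, if_pos ⟨h.1.symm, h.2.symm⟩]
  | case2 x y h =>
    rw [blowupColor.eq_1 c₀ y x, if_neg (by tauto), Sym2.eq_swap]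

theorem blowupColor_add_mul_of_ne {u v : Fin b} (h : u ≠ v) (x y : ℕ) :
    blowupColor c₀ (u + b * x) (v + b * y) = c₀ s(u, v) := by
  have hu : (u + b * x) % b = u := by simp [Nat.mod_eq_of_lt u.isLt]
  have hv : (v + b * y) % b = v := by simp [Nat.mod_eq_of_lt v.isLt]
  rw [blowupColor, if_neg (by rw [hu, hv]; exact fun h' => h (Fin.ext h'.1))]
  simp only [hu, hv]

theorem blowupColor_add_mul_same (u : Fin b) {x y : ℕ} (h : x ≠ y) :
    blowupColor c₀ (u + b * x) (u + b * y) = blowupColor c₀ x y := by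
  have hb : 0 < b := Nat.zero_lt_of_lt (Fact.out : 1 < b)
  rw [blowupColor, if_pos (by constructor <;> simp; omega)]
  congr 1 <;> simp [Nat.add_mul_div_left _ _ hb, Nat.div_eq_of_lt u.isLt]

def blowupColoring (n : ℕ) : Sym2 (Fin n) → Fin r :=
  Sym2.lift ⟨fun x y => blowupColor c₀ x y, fun x y => blowupColor_comm c₀ x y⟩

variable {m : ℕ} (H : SimpleGraph (Fin m))

theorem isRainbow_crossingCopy_iff {q n : ℕ} (hn : q * b ≤ n) (g : Fin m ↪ Fin b)
    (a : Fin m → Fin q) :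
    IsRainbow H (blowupColoring c₀ n) ((crossingCopy g a).trans (blowupVertex hn)) ↔
      IsRainbow H c₀ g :=
  isRainbow_congr fun i j hij =>
    blowupColor_add_mul_of_ne c₀ (g.injective.ne hij.ne) (a i) (a j)

theorem isRainbow_innerCopy_iff {q n : ℕ} (hn : q * b ≤ n) (u : Fin b) (f : Fin m ↪ Fin q) :
    IsRainbow H (blowupColoring c₀ n) ((innerCopy u f).trans (blowupVertex hn)) ↔
      IsRainbow H (blowupColoring c₀ q) f :=
  isRainbow_congr fun _ _ hij =>
    blowupColor_add_mul_same c₀ u (Fin.val_injective.ne (f.injective.ne hij.ne))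

theorem rainbowCount_blowupColoring_ge (hm : 1 < m) (n : ℕ) :
    rainbowCount H c₀ * (n / b) ^ m + b * rainbowCount H (blowupColoring c₀ (n / b)) ≤
      rainbowCount H (blowupColoring c₀ n) := by
  have hn : n / b * b ≤ n := Nat.div_mul_le_self n b
  let copy : ({g : Fin m ↪ Fin b // IsRainbow H c₀ g} × (Fin m → Fin (n / b))) ⊕
      (Fin b × {f : Fin m ↪ Fin (n / b) // IsRainbow H (blowupColoring c₀ (n / b)) f}) →
      {f : Fin m ↪ Fin n // IsRainbow H (blowupColoring c₀ n) f} :=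
    Sum.elim
      (fun p => ⟨_, (isRainbow_crossingCopy_iff c₀ H hn p.1.1 p.2).2 p.1.2⟩)
      (fun p => ⟨_, (isRainbow_innerCopy_iff c₀ H hn p.1 p.2.1).2 p.2.2⟩)
  have hcopy : copy.Injective := by
    have hplace {e e' : Fin m ↪ Fin (n / b) × Fin b}
        (h : e.trans (blowupVertex hn) = e'.trans (blowupVertex hn)) : e = e' :=
      Function.Embedding.ext fun i => (blowupVertex hn).injective (DFunLike.congr_fun h i)
    rintro (⟨g, a⟩ | ⟨u, f⟩) (⟨g', a'⟩ | ⟨u', f'⟩) h <;>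
      have h' := hplace (congrArg Subtype.val h) <;> dsimp only at h'
    · obtain ⟨hg, rfl⟩ := crossingCopy_inj.1 h'
      rw [Subtype.val_injective hg]
    · exact absurd h' (crossingCopy_ne_innerCopy hm _ _ _ _)
    · exact absurd h'.symm (crossingCopy_ne_innerCopy hm _ _ _ _)
    · obtain ⟨rfl, hf⟩ := (innerCopy_inj (by omega)).1 h'
      rw [Subtype.val_injective hf]
  calc _ = Nat.card (({g : Fin m ↪ Fin b // IsRainbow H c₀ g} × (Fin m → Fin (n / b))) ⊕
        (Fin b × {f : Fin m ↪ Fin (n / b) // IsRainbow H (blowupColoring c₀ (n / b)) f})) := by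
        simp [rainbowCount, Nat.card_sum, Nat.card_prod]
    _ ≤ _ := Nat.card_le_card_of_injective copy hcopy

end Blowup

/-- `2/31` is the fixed point of `a = 40/5^4 + 5a/5^4`. -/
theorem two_mul_pow_four_le_of_recursion (R : ℕ → ℕ)
    (hR : ∀ n, 40 * (n / 5) ^ 4 + 5 * R (n / 5) ≤ R n) (n : ℕ) :
    2 * n ^ 4 ≤ 31 * R n + 62 * n ^ 3 := by
  induction n using Nat.strong_induction_on with
  | _ n ih =>
  rcases le_or_gt n 31 with hn | hn
  · calc 2 * n ^ 4 = 2 * n * n ^ 3 := by ring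
      _ ≤ 62 * n ^ 3 := Nat.mul_le_mul_right _ (by omega)
      _ ≤ 31 * R n + 62 * n ^ 3 := Nat.le_add_left _ _
  · have hstep := hR n
    have hih := ih (n / 5) (by omega)
    set q := n / 5
    have hq : 6 ≤ q := by omega
    have hupper : n ^ 4 ≤ (5 * q + 4) ^ 4 := Nat.pow_le_pow_left (by omega) 4
    have hlower : (5 * q) ^ 3 ≤ n ^ 3 := Nat.pow_le_pow_left (by omega) 3
    have hpoly : 2 * n ^ 4 + 310 * q ^ 3 ≤ 1250 * q ^ 4 + 62 * n ^ 3 := by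
      nlinarith [sq_nonneg q]
    linarith

theorem rainbowCount_le_rbL {m n r : ℕ} (H : SimpleGraph (Fin m)) (c : Sym2 (Fin n) → Fin r) :
    rainbowCount H c ≤ rbL H n r := by
  refine le_csSup ⟨Nat.card (Fin m ↪ Fin n), ?_⟩ ⟨c, rfl⟩
  rintro _ ⟨c', rfl⟩
  exact Nat.card_le_card_of_injective _ Subtype.val_injective

instance : DecidableRel K4e.Adj := fun a b =>
  decidable_of_iff (a ≠ b ∧ s(a, b) ≠ s(2, 3)) (by simp [K4e])

theorem autCard_K4e : autCard K4e = 4 := by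
  let e : (K4e ≃g K4e) ≃ {e : Fin 4 ≃ Fin 4 // ∀ a b, K4e.Adj (e a) (e b) ↔ K4e.Adj a b} :=
    { toFun := fun φ => ⟨φ.toEquiv, fun _ _ => φ.map_rel_iff⟩
      invFun := fun e => ⟨e.1, e.2 _ _⟩
      left_inv := fun _ => rfl
      right_inv := fun _ => rfl }
  rw [autCard, Nat.card_congr e, Nat.card_eq_fintype_card]
  decide

def sumColoring : Sym2 (Fin 5) → Fin 5 := Sym2.lift ⟨(· + ·), add_comm⟩

theorem rainbowCount_K4e_sumColoring : rainbowCount K4e sumColoring = 40 := by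
  let e : {f : Fin 4 ↪ Fin 5 // IsRainbow K4e sumColoring f} ≃
      {g : Fin 4 → Fin 5 // ∃ h : Function.Injective g, IsRainbow K4e sumColoring ⟨g, h⟩} :=
    { toFun := fun f => ⟨f.1, f.1.injective, f.2⟩
      invFun := fun g => ⟨⟨g.1, g.2.1⟩, g.2.2⟩
      left_inv := fun _ => rfl
      right_inv := fun _ => rfl }
  rw [rainbowCount, Nat.card_congr e, Nat.card_eq_fintype_card]
  decide

instance : Fact (1 < 5) := ⟨by norm_num⟩

theorem rainbowCount_K4e_blowupColoring_ge (n : ℕ) :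
    2 * n ^ 4 ≤ 31 * rainbowCount K4e (blowupColoring sumColoring n) + 62 * n ^ 3 :=
  two_mul_pow_four_le_of_recursion (fun n => rainbowCount K4e (blowupColoring sumColoring n))
    (fun n => by
      simpa [rainbowCount_K4e_sumColoring] using
        rainbowCount_blowupColoring_ge sumColoring K4e (by norm_num) n) n

theorem rbL_K4e_ge (n : ℕ) : 2 * (n : ℝ) ^ 4 - 62 * n ^ 3 ≤ 31 * rbL K4e n 5 := by
  have h := (rainbowCount_K4e_blowupColoring_ge n).trans
    (Nat.add_le_add_right (Nat.mul_le_mul_left 31 (rainbowCount_le_rbL K4e _)) _)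
  have h' : (2 * n ^ 4 : ℝ) ≤ 31 * rbL K4e n 5 + 62 * n ^ 3 := by exact_mod_cast h
  linarith

theorem rbC_K4e_ge {n : ℕ} (hn : 124 ≤ n) : 3 / 62 ≤ rbC K4e n 5 := by
  have hcopies : (n.choose 4 * Nat.factorial 4 : ℝ) ≤ n ^ 4 := by
    rw [← Nat.cast_mul, mul_comm, ← Nat.descFactorial_eq_factorial_mul_choose]
    exact_mod_cast Nat.descFactorial_le_pow n 4
  have hpos : (0 : ℝ) < n.choose 4 * Nat.factorial 4 := by
    have := Nat.choose_pos (show 4 ≤ n by omega)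
    positivity
  have hcube : 124 * (n : ℝ) ^ 3 ≤ n ^ 4 := by
    rw [pow_succ' (n : ℝ) 3]
    exact mul_le_mul_of_nonneg_right (by exact_mod_cast hn) (by positivity)
  rw [rbC, le_div_iff₀ hpos]
  calc 3 / 62 * (n.choose 4 * Nat.factorial 4 : ℝ) ≤ 3 / 62 * n ^ 4 := by gcongr
    _ ≤ rbL K4e n 5 := by linarith [rbL_K4e_ge n]

theorem stmt9 :
    (∃ C : ℝ, ∃ N : ℕ, ∀ n ≥ N,
      (rbL K4e n 5 : ℝ) / autCard K4e ≥ (n : ℝ) ^ 4 / 62 - C * (n : ℝ) ^ 3) ∧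
    ((1 : ℝ) / 62 > 6 / 625) ∧
    ((6 : ℝ) / 625 = (Nat.choose 5 5 * Nat.factorial 5 : ℝ) / (4 * 5 ^ 5)) ∧
    ¬ Tendsto (fun n => rbC K4e n 5) atTop
        (𝓝 ((Nat.choose 5 5 * Nat.factorial 5 : ℝ) / 5 ^ 5)) := by
  refine ⟨⟨2, 0, fun n _ => ?_⟩, by norm_num, by norm_num [Nat.factorial], fun hT => ?_⟩
  · rw [autCard_K4e, ge_iff_le, le_div_iff₀ (by norm_num)]
    have : (0 : ℝ) ≤ n ^ 3 := by positivity
    push_cast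
    linarith [rbL_K4e_ge n]
  · have hlt : (Nat.choose 5 5 * Nat.factorial 5 : ℝ) / 5 ^ 5 < 3 / 62 := by
      norm_num [Nat.factorial]
    obtain ⟨n, hn, hsmall⟩ :=
      ((eventually_ge_atTop 124).and (hT.eventually (gt_mem_nhds hlt))).exists
    exact (rbC_K4e_ge hn).not_gt hsmall
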